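/- Let ρₙ = Beta(nθ₀, n(1−θ₀)) for θ₀ ∈ (0,1). Then there exists C₁ > 0 such that ∫₀¹ |log(θ₀/θ)|³ dρₙ(θ) < C₁/n for all sufficiently large n. -/

import Mathlib

open MeasureTheory

/-- The density of the Beta distribution with parameters `a`, `b` on `(0,1)`. -/
noncomputable def betaPDF (a b θ : ℝ) : ℝ :=
  θ ^ (a - 1) * (1 - θ) ^ (b - 1) * (Real.Gamma (a + b) / (Real.Gamma a * Real.Gamma b))

/-!
For `θ₀, θ ∈ (0,1)` we have `|log (θ₀/θ)| ≤ |θ₀ - θ| / (θ₀ θ)` and `|θ₀ - θ| ≤ 1`, hence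
`|log (θ₀/θ)|³ ≤ (θ₀ - θ)² / (θ₀ θ)³`. The factor `θ⁻³` is absorbed into the density by lowering
the first parameter: `θ³ · Beta(a, b) = (∏_{i<3} (a+i)/(a+b+i)) · Beta(a+3, b)`. What is left is the
second moment about `θ₀` of `Beta(nθ₀ - 3, n(1-θ₀))`, a law whose mean is within `O(1/n)` of `θ₀`
and whose variance is `O(1/n)`; the explicit formula bounds everything by `16 / (θ₀⁶ n)` as soon
as `nθ₀ ≥ 6`.
-/

open Real Set

lemma abs_log_div_le {x y : ℝ} (hx : 0 < x) (hy : 0 < y) :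
    |log (x / y)| ≤ |x - y| / min x y := by
  wlog hxy : x ≤ y generalizing x y
  · rw [← inv_div, log_inv, abs_neg, abs_sub_comm, min_comm]
    exact this hy hx (le_of_not_ge hxy)
  rw [min_eq_left hxy, ← inv_div, log_inv, abs_neg,
    abs_of_nonneg (log_nonneg ((one_le_div hx).2 hxy)), abs_sub_comm,
    abs_of_nonneg (sub_nonneg.2 hxy)]
  calc log (y / x) ≤ y / x - 1 := log_le_sub_one_of_pos (div_pos hy hx)
    _ = (y - x) / x := by field_simp

lemma abs_log_div_pow_three_le {x y : ℝ} (hx : x ∈ Ioo 0 1) (hy : y ∈ Ioo 0 1) :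
    |log (x / y)| ^ 3 ≤ (x - y) ^ 2 / (x * y) ^ 3 := by
  have hxy : 0 < x * y := mul_pos hx.1 hy.1
  have hmin : x * y ≤ min x y :=
    le_min (mul_le_of_le_one_right hx.1.le hy.2.le) (mul_le_of_le_one_left hy.1.le hx.2.le)
  have hlog : |log (x / y)| ≤ |x - y| / (x * y) :=
    (abs_log_div_le hx.1 hy.1).trans (div_le_div_of_nonneg_left (abs_nonneg _) hxy hmin)
  have hdist : |x - y| ≤ 1 := abs_sub_le_iff.2 ⟨by linarith [hx.2, hy.1], by linarith [hx.1, hy.2]⟩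
  calc |log (x / y)| ^ 3 ≤ (|x - y| / (x * y)) ^ 3 := pow_le_pow_left₀ (abs_nonneg _) hlog 3
    _ = |x - y| * (x - y) ^ 2 / (x * y) ^ 3 := by rw [div_pow, pow_succ', sq_abs]
    _ ≤ 1 * (x - y) ^ 2 / (x * y) ^ 3 := by gcongr
    _ = (x - y) ^ 2 / (x * y) ^ 3 := by rw [one_mul]

section Beta

variable {a b : ℝ}

lemma betaPDF_nonneg {θ : ℝ} (hθ : θ ∈ Ioo 0 1) (ha : 0 < a) (hb : 0 < b) :
    0 ≤ betaPDF a b θ := by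
  have := Gamma_pos_of_pos ha
  have := Gamma_pos_of_pos hb
  have := Gamma_pos_of_pos (add_pos ha hb)
  exact mul_nonneg (mul_nonneg (rpow_nonneg hθ.1.le _) (rpow_nonneg (sub_nonneg.2 hθ.2.le) _))
    (by positivity)

lemma integral_betaPDF (ha : 0 < a) (hb : 0 < b) : ∫ θ in Ioo 0 1, betaPDF a b θ = 1 := by
  have hreal : ProbabilityTheory.betaPDFReal a b = (Ioo 0 1).indicator (betaPDF a b) := by
    ext θ
    simp only [ProbabilityTheory.betaPDFReal, indicator, mem_Ioo, betaPDF,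
      ProbabilityTheory.beta, one_div_div]
    split_ifs <;> ring
  rw [← integral_indicator measurableSet_Ioo, ← hreal,
    integral_eq_lintegral_of_nonneg_ae _ (by fun_prop)]
  · exact ENNReal.toReal_eq_one_iff _ |>.mpr (ProbabilityTheory.lintegral_betaPDF_eq_one ha hb)
  · exact ae_of_all _ fun θ => hreal ▸ indicator_nonneg (fun θ hθ => betaPDF_nonneg hθ ha hb) θ

lemma integrableOn_betaPDF (ha : 0 < a) (hb : 0 < b) : IntegrableOn (betaPDF a b) (Ioo 0 1) :=
  Integrable.of_integral_ne_zero (by rw [integral_betaPDF ha hb]; exact one_ne_zero)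

lemma mul_betaPDF {θ : ℝ} (hθ : 0 < θ) (ha : 0 < a) (hb : 0 < b) :
    θ * betaPDF a b θ = a / (a + b) * betaPDF (a + 1) b θ := by
  have hab : 0 < a + b := by linarith
  rw [betaPDF, betaPDF, show a + 1 + b = a + b + 1 by ring, Gamma_add_one ha.ne',
    Gamma_add_one hab.ne', add_sub_cancel_right, rpow_sub_one hθ.ne']
  have := Gamma_pos_of_pos ha
  have := Gamma_pos_of_pos hb
  field_simp

lemma pow_mul_betaPDF {θ : ℝ} (hθ : 0 < θ) (ha : 0 < a) (hb : 0 < b) (k : ℕ) :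
    θ ^ k * betaPDF a b θ
      = (∏ i ∈ Finset.range k, (a + i) / (a + b + i)) * betaPDF (a + k) b θ := by
  induction k with
  | zero => simp
  | succ k ih =>
    rw [pow_succ', mul_assoc, ih, mul_left_comm, mul_betaPDF hθ (by positivity) hb,
      Finset.prod_range_succ, Nat.cast_succ, add_right_comm a, ← add_assoc, mul_assoc]

lemma integrableOn_pow_mul_betaPDF (ha : 0 < a) (hb : 0 < b) (k : ℕ) :
    IntegrableOn (fun θ => θ ^ k * betaPDF a b θ) (Ioo 0 1) :=
  IntegrableOn.congr_fun ((integrableOn_betaPDF (by positivity) hb).const_mul _)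
    (fun θ hθ => (pow_mul_betaPDF hθ.1 ha hb k).symm) measurableSet_Ioo

lemma integral_pow_mul_betaPDF (ha : 0 < a) (hb : 0 < b) (k : ℕ) :
    ∫ θ in Ioo 0 1, θ ^ k * betaPDF a b θ = ∏ i ∈ Finset.range k, (a + i) / (a + b + i) := by
  rw [setIntegral_congr_fun measurableSet_Ioo fun θ hθ => pow_mul_betaPDF hθ.1 ha hb k,
    integral_const_mul, integral_betaPDF (by positivity) hb, mul_one]

lemma integrableOn_sq_sub_mul_betaPDF (ha : 0 < a) (hb : 0 < b) (c : ℝ) :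
    IntegrableOn (fun θ => (c - θ) ^ 2 * betaPDF a b θ) (Ioo 0 1) := by
  have hint := integrableOn_pow_mul_betaPDF ha hb
  refine IntegrableOn.congr_fun (((hint 0).const_mul (c ^ 2)).sub ((hint 1).const_mul (2 * c))
    |>.add (hint 2)) (fun θ _ => ?_) measurableSet_Ioo
  simp only [Pi.add_apply, Pi.sub_apply]
  ring

lemma integral_sq_sub_mul_betaPDF (ha : 0 < a) (hb : 0 < b) (c : ℝ) :
    ∫ θ in Ioo 0 1, (c - θ) ^ 2 * betaPDF a b θ
      = c ^ 2 - 2 * c * (a / (a + b)) + a / (a + b) * ((a + 1) / (a + b + 1)) := by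
  have hexpand : ∀ θ, (c - θ) ^ 2 * betaPDF a b θ = c ^ 2 * (θ ^ 0 * betaPDF a b θ)
      - 2 * c * (θ ^ 1 * betaPDF a b θ) + θ ^ 2 * betaPDF a b θ := fun θ => by ring
  have hint := integrableOn_pow_mul_betaPDF ha hb
  simp_rw [hexpand]
  rw [integral_add (by exact ((hint 0).const_mul _).sub ((hint 1).const_mul _)) (hint 2),
    integral_sub (by exact (hint 0).const_mul _) (by exact (hint 1).const_mul _),
    integral_const_mul, integral_const_mul]
  simp only [integral_pow_mul_betaPDF ha hb, Finset.prod_range_succ, Finset.prod_range_zero]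
  push_cast
  ring

lemma abs_log_div_pow_three_mul_betaPDF_le {θ₀ θ : ℝ} (hθ₀ : θ₀ ∈ Ioo 0 1) (hθ : θ ∈ Ioo 0 1)
    (ha : 0 < a) (hb : 0 < b) :
    |log (θ₀ / θ)| ^ 3 * betaPDF (a + 3) b θ
      ≤ (θ₀ - θ) ^ 2 * betaPDF a b θ / (θ₀ ^ 3 * ∏ i ∈ Finset.range 3, (a + i) / (a + b + i)) := by
  have hprod : 0 < ∏ i ∈ Finset.range 3, (a + i) / (a + b + i) :=
    Finset.prod_pos fun i _ => by positivity
  have htilt := pow_mul_betaPDF hθ.1 ha hb 3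
  rw [Nat.cast_ofNat] at htilt
  rw [le_div_iff₀ (mul_pos (pow_pos hθ₀.1 3) hprod)]
  calc _ = |log (θ₀ / θ)| ^ 3 * θ₀ ^ 3 * ((∏ i ∈ Finset.range 3, (a + i) / (a + b + i))
          * betaPDF (a + 3) b θ) := by ring
    _ = |log (θ₀ / θ)| ^ 3 * (θ₀ * θ) ^ 3 * betaPDF a b θ := by rw [← htilt]; ring
    _ ≤ (θ₀ - θ) ^ 2 * betaPDF a b θ :=
      mul_le_mul_of_nonneg_right ((le_div_iff₀ (pow_pos (mul_pos hθ₀.1 hθ.1) 3)).1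
        (abs_log_div_pow_three_le hθ₀ hθ)) (betaPDF_nonneg hθ ha hb)

lemma integral_abs_log_div_pow_three_mul_betaPDF_le {θ₀ : ℝ} (hθ₀ : θ₀ ∈ Ioo 0 1) (ha : 0 < a)
    (hb : 0 < b) :
    ∫ θ in Ioo 0 1, |log (θ₀ / θ)| ^ 3 * betaPDF (a + 3) b θ
      ≤ (θ₀ ^ 2 - 2 * θ₀ * (a / (a + b)) + a / (a + b) * ((a + 1) / (a + b + 1)))
        / (θ₀ ^ 3 * ∏ i ∈ Finset.range 3, (a + i) / (a + b + i)) := by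
  rw [← integral_sq_sub_mul_betaPDF ha hb, ← integral_div]
  refine integral_mono_of_nonneg ?_ ?_ ?_
  · filter_upwards [ae_restrict_mem measurableSet_Ioo] with θ hθ
    exact mul_nonneg (by positivity) (betaPDF_nonneg hθ (by positivity) hb)
  · exact (integrableOn_sq_sub_mul_betaPDF ha hb θ₀).div_const _
  · filter_upwards [ae_restrict_mem measurableSet_Ioo] with θ hθ
    exact abs_log_div_pow_three_mul_betaPDF_le hθ₀ hθ ha hb

end Beta

lemma beta_moment_ratio_le {θ₀ n : ℝ} (hθ₀ : θ₀ ∈ Ioo 0 1) (hn : 6 ≤ n * θ₀) :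
    (θ₀ ^ 2 - 2 * θ₀ * ((n * θ₀ - 3) / (n - 3))
        + (n * θ₀ - 3) / (n - 3) * ((n * θ₀ - 3 + 1) / (n - 3 + 1)))
      / (θ₀ ^ 3 * ∏ i ∈ Finset.range 3, (n * θ₀ - 3 + i) / (n - 3 + i))
      ≤ 16 / (θ₀ ^ 6 * n) := by
  obtain ⟨h0, h1⟩ := hθ₀
  have hn' : 6 ≤ n := hn.trans (mul_le_of_le_one_right (by nlinarith) h1.le)
  have hclosed : (θ₀ ^ 2 - 2 * θ₀ * ((n * θ₀ - 3) / (n - 3))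
        + (n * θ₀ - 3) / (n - 3) * ((n * θ₀ - 3 + 1) / (n - 3 + 1)))
      / (θ₀ ^ 3 * ∏ i ∈ Finset.range 3, (n * θ₀ - 3 + i) / (n - 3 + i))
      = (n - 1) * (n * θ₀ * (1 - θ₀) + 6 * (1 - θ₀) ^ 2)
        / (θ₀ ^ 3 * ((n * θ₀ - 1) * (n * θ₀ - 2) * (n * θ₀ - 3))) := by
    simp only [Finset.prod_range_succ, Finset.prod_range_zero]
    push_cast
    rw [show n * θ₀ - 3 + 1 = n * θ₀ - 2 by ring, show n * θ₀ - 3 + 2 = n * θ₀ - 1 by ring,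
      show n - 3 + 1 = n - 2 by ring, show n - 3 + 2 = n - 1 by ring, add_zero, add_zero]
    have : n * θ₀ - 1 ≠ 0 := by linarith
    have : n * θ₀ - 2 ≠ 0 := by linarith
    have : n * θ₀ - 3 ≠ 0 := by linarith
    have : n - 1 ≠ 0 := by linarith
    have : n - 2 ≠ 0 := by linarith
    have : n - 3 ≠ 0 := by linarith
    field_simp
    ring
  have hnum : (n - 1) * (n * θ₀ * (1 - θ₀) + 6 * (1 - θ₀) ^ 2) ≤ 2 * n ^ 2 := by
    have hX : n * θ₀ * (1 - θ₀) + 6 * (1 - θ₀) ^ 2 ≤ 2 * n := by nlinarith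
    have hX0 : 0 ≤ n * θ₀ * (1 - θ₀) + 6 * (1 - θ₀) ^ 2 := by
      have : 0 ≤ n * θ₀ * (1 - θ₀) := by nlinarith
      positivity
    nlinarith
  have hden : (n * θ₀) ^ 3 / 8 ≤ (n * θ₀ - 1) * (n * θ₀ - 2) * (n * θ₀ - 3) := by
    have h3 : n * θ₀ / 2 ≤ n * θ₀ - 3 := by linarith
    calc (n * θ₀) ^ 3 / 8 = (n * θ₀ / 2) * (n * θ₀ / 2) * (n * θ₀ / 2) := by ring
      _ ≤ (n * θ₀ - 1) * (n * θ₀ - 2) * (n * θ₀ - 3) := by gcongr <;> nlinarith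
  have hden_pos : 0 < (n * θ₀ - 1) * (n * θ₀ - 2) * (n * θ₀ - 3) :=
    lt_of_lt_of_le (by positivity) hden
  rw [hclosed, div_le_div_iff₀ (by positivity) (by positivity)]
  calc (n - 1) * (n * θ₀ * (1 - θ₀) + 6 * (1 - θ₀) ^ 2) * (θ₀ ^ 6 * n)
      ≤ 2 * n ^ 2 * (θ₀ ^ 6 * n) := by gcongr
    _ = 16 * (θ₀ ^ 3 * ((n * θ₀) ^ 3 / 8)) := by ring
    _ ≤ 16 * (θ₀ ^ 3 * ((n * θ₀ - 1) * (n * θ₀ - 2) * (n * θ₀ - 3))) := by gcongr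

/-- For `ρₙ = Beta(nθ₀, n(1−θ₀))` with `θ₀ ∈ (0,1)`, there is `C₁ > 0` such that
`∫₀¹ |log(θ₀/θ)|³ dρₙ(θ) < C₁/n` for all sufficiently large `n`. -/
theorem stmt16 (θ₀ : ℝ) (hθ₀ : θ₀ ∈ Set.Ioo (0 : ℝ) 1) :
    ∃ C₁ > (0 : ℝ), ∃ N : ℕ, ∀ n : ℕ, N ≤ n →
      ∫ θ in Set.Ioo (0 : ℝ) 1,
          |Real.log (θ₀ / θ)| ^ 3 * betaPDF (n * θ₀) (n * (1 - θ₀)) θ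
        < C₁ / n := by
  refine ⟨17 / θ₀ ^ 6, by have := hθ₀.1; positivity, ⌈6 / θ₀⌉₊, fun n hn => ?_⟩
  have hnθ₀ : 6 ≤ n * θ₀ :=
    (div_le_iff₀ hθ₀.1).1 ((Nat.le_ceil _).trans (by exact_mod_cast hn))
  have hn_pos : 0 < (n : ℝ) := pos_of_mul_pos_left (by linarith) hθ₀.1.le
  have hbound := integral_abs_log_div_pow_three_mul_betaPDF_le hθ₀ (a := n * θ₀ - 3)
    (b := n * (1 - θ₀)) (by linarith) (mul_pos hn_pos (sub_pos.2 hθ₀.2))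
  rw [sub_add_cancel, show n * θ₀ - 3 + n * (1 - θ₀) = n - 3 by ring] at hbound
  calc _ ≤ _ := hbound
    _ ≤ 16 / (θ₀ ^ 6 * n) := beta_moment_ratio_le hθ₀ hnθ₀
    _ < 17 / θ₀ ^ 6 / n := by
      rw [div_div]
      have := hθ₀.1
      gcongr
      norm_num
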